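/- arXiv:2603.19365 — 4 statements merged into one kernel-verified Lean document; each statement's English description precedes it below -/
import Mathlib

section
/- Let Γ be a linearly ordered additive commutative group and let L be a field equipped with an additive valuation v : L → WithTop Γ (so v(ab) = v(a) + v(b), v(a+b) ≥ min(v(a),v(b)), v(0) = ⊤, v(1) = 0). Let k ≥ 1, let b₁,…,b_k ∈ L, and let γ ∈ Γ. Then γ ≤ v(bᵢ) for every i = 1,…,k if and only if j•γ ≤ v(e_j(b₁,…,b_k)) for every j = 1,…,k. -/
/-- `j`-th elementary symmetric function of `b 0, …, b (k-1)`: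
the sum of all products of `j` of them with distinct indices (`e₀ = 1`). -/
def esym {A : Type*} [CommSemiring A] {k : ℕ} (b : Fin k → A) (j : ℕ) : A :=
  ∑ T ∈ Finset.powersetCard j Finset.univ, ∏ i ∈ T, b i

/-!
If `γ ≤ v bᵢ` for all `i`, every monomial of `e_j` has valuation at least `j • γ`, hence so does
`e_j`. Conversely, let `S = {i | v bᵢ < γ}` be nonempty and `j = #S`. Among the monomials
`∏_{i ∈ T} bᵢ` with `#T = j`, the one with `T = S` has strictly the smallest valuation: trading the
indices of `S \ T` for those of `T \ S` replaces summands `< γ` by summands `≥ γ`. So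
`v (e_j) = ∑_{i ∈ S} v bᵢ < j • γ`.
-/

open Finset

namespace WithTop

variable {α ι : Type*} [AddCommMonoid α] [Preorder α] [AddLeftStrictMono α] [AddRightStrictMono α]

theorem sum_lt_sum_of_nonempty {s : Finset ι} (hs : s.Nonempty) {f g : ι → WithTop α}
    (hlt : ∀ i ∈ s, f i < g i) : ∑ i ∈ s, f i < ∑ i ∈ s, g i := by
  induction hs using Nonempty.cons_induction with
  | singleton a => simpa using hlt a (mem_singleton_self a)
  | cons a s ha _ ih =>
    simp only [sum_cons, mem_cons, forall_eq_or_imp] at hlt ⊢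
    exact WithTop.add_lt_add hlt.1 (ih hlt.2)

variable {Γ : Type*} [AddCommMonoid Γ] [LinearOrder Γ] [IsOrderedCancelAddMonoid Γ]

theorem sum_lt_card_nsmul_coe {s : Finset ι} (hs : s.Nonempty) {f : ι → WithTop Γ} {γ : Γ}
    (hlt : ∀ i ∈ s, f i < γ) : ∑ i ∈ s, f i < #s • (γ : WithTop Γ) := by
  simpa using sum_lt_sum_of_nonempty hs hlt

theorem sum_lt_sum_of_card_eq [DecidableEq ι] {f : ι → WithTop Γ} {γ : Γ} {S T : Finset ι}
    (hS : ∀ i ∈ S, f i < γ) (hT : ∀ i ∈ T \ S, γ ≤ f i) (hcard : #T = #S) (hne : T ≠ S) :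
    ∑ i ∈ S, f i < ∑ i ∈ T, f i := by
  have hST : (S \ T).Nonempty := by
    rw [sdiff_nonempty]
    exact fun hsub ↦ hne (eq_of_subset_of_card_le hsub hcard.le).symm
  have hinter : ∑ i ∈ S ∩ T, f i ≠ ⊤ :=
    (sum_le_card_nsmul _ _ _ fun i hi ↦ (hS i (mem_inter.1 hi).1).le).trans_lt
      (WithTop.coe_nsmul γ _ ▸ WithTop.coe_lt_top _) |>.ne
  calc ∑ i ∈ S, f i = ∑ i ∈ S ∩ T, f i + ∑ i ∈ S \ T, f i := (sum_inter_add_sum_sdiff ..).symm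
    _ < ∑ i ∈ S ∩ T, f i + #(S \ T) • (γ : WithTop Γ) :=
      WithTop.add_lt_add_left hinter
        (sum_lt_card_nsmul_coe hST fun i hi ↦ hS i (mem_sdiff.1 hi).1)
    _ = ∑ i ∈ T ∩ S, f i + #(T \ S) • (γ : WithTop Γ) := by
      rw [inter_comm, card_sdiff_comm hcard.symm]
    _ ≤ ∑ i ∈ T ∩ S, f i + ∑ i ∈ T \ S, f i := by
      gcongr; exact card_nsmul_le_sum _ _ _ hT
    _ = ∑ i ∈ T, f i := sum_inter_add_sum_sdiff ..

end WithTop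

namespace AddValuation

variable {R Γ₀ : Type*} [CommRing R] [LinearOrderedAddCommMonoidWithTop Γ₀] (w : AddValuation R Γ₀)

theorem map_prod {ι : Type*} (s : Finset ι) (f : ι → R) : w (∏ i ∈ s, f i) = ∑ i ∈ s, w (f i) := by
  classical
  induction s using Finset.induction with
  | empty => simp
  | insert a s ha ih => rw [prod_insert ha, sum_insert ha, map_mul, ih]

theorem map_sum_eq_of_lt {ι : Type*} [DecidableEq ι] {s : Finset ι} {f : ι → R} {j : ι}
    (hj : j ∈ s) (hf : ∀ i ∈ s \ {j}, w (f j) < w (f i)) : w (∑ i ∈ s, f i) = w (f j) :=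
  Valuation.map_sum_eq_of_lt (toValuation w) hj hf

theorem nsmul_le_map_esym {k : ℕ} {b : Fin k → R} {g : Γ₀} (h : ∀ i, g ≤ w (b i)) (j : ℕ) :
    j • g ≤ w (esym b j) := by
  refine w.map_le_sum fun T hT ↦ ?_
  rw [map_prod, ← (mem_powersetCard.1 hT).2]
  exact card_nsmul_le_sum _ _ _ fun i _ ↦ h i

theorem exists_map_esym_lt {Γ : Type*} [AddCancelCommMonoid Γ] [LinearOrder Γ]
    [IsOrderedCancelAddMonoid Γ] (w : AddValuation R (WithTop Γ)) {k : ℕ} {b : Fin k → R} {γ : Γ}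
    (h : ∃ i, w (b i) < γ) :
    ∃ j, 1 ≤ j ∧ j ≤ k ∧ w (esym b j) < j • (γ : WithTop Γ) := by
  classical
  set S : Finset (Fin k) := univ.filter fun i ↦ w (b i) < γ
  have hS : ∀ i, i ∈ S ↔ w (b i) < γ := by simp [S]
  have hSne : S.Nonempty := let ⟨i, hi⟩ := h; ⟨i, (hS i).2 hi⟩
  have hvS : w (∏ i ∈ S, b i) < #S • (γ : WithTop Γ) := by
    rw [map_prod]; exact WithTop.sum_lt_card_nsmul_coe hSne fun i hi ↦ (hS i).1 hi
  have hmin : w (esym b #S) = w (∏ i ∈ S, b i) := by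
    refine w.map_sum_eq_of_lt (mem_powersetCard.2 ⟨subset_univ S, rfl⟩) fun T hT ↦ ?_
    obtain ⟨hT, hTS⟩ := mem_sdiff.1 hT
    rw [map_prod, map_prod]
    exact WithTop.sum_lt_sum_of_card_eq (fun i hi ↦ (hS i).1 hi)
      (fun i hi ↦ not_lt.1 fun hlt ↦ (mem_sdiff.1 hi).2 ((hS i).2 hlt))
      (mem_powersetCard.1 hT).2 (by simpa using hTS)
  exact ⟨#S, hSne.card_pos, card_le_univ S |>.trans_eq (Fintype.card_fin k), hmin ▸ hvS⟩

end AddValuation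

theorem valuation_esymm_iff_general
    {Γ : Type*} [AddCommGroup Γ] [LinearOrder Γ] [IsOrderedAddMonoid Γ] {L : Type*} [Field L]
    (v : L → WithTop Γ)
    (hv_mul : ∀ a b : L, v (a * b) = v a + v b)
    (hv_add : ∀ a b : L, min (v a) (v b) ≤ v (a + b))
    (hv_zero : v 0 = ⊤) (hv_one : v 1 = 0)
    (k : ℕ) (b : Fin k → L) (γ : Γ) :
    (∀ i, (γ : WithTop Γ) ≤ v (b i)) ↔
      (∀ j, 1 ≤ j → j ≤ k → ((j • γ : Γ) : WithTop Γ) ≤ v (esym b j)) := by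
  let w := AddValuation.of v hv_zero hv_one hv_add hv_mul
  refine ⟨fun h j _ _ ↦ WithTop.coe_nsmul γ j ▸ w.nsmul_le_map_esym h j, fun h ↦ ?_⟩
  by_contra! hlt
  obtain ⟨j, hj1, hjk, hj⟩ := w.exists_map_esym_lt hlt
  exact (h j hj1 hjk).not_gt (WithTop.coe_nsmul γ j ▸ hj)

/-- For an additive valuation `v` on a field `L`, all of `b₁, …, b_k` have
valuation at least `γ` iff `e_j(b₁,…,b_k)` has valuation at least `j•γ` for
every `j = 1, …, k`. -/
theorem valuation_esymm_iff
    {Γ : Type*} [AddCommGroup Γ] [LinearOrder Γ] [IsOrderedAddMonoid Γ] {L : Type*} [Field L]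
    (v : L → WithTop Γ)
    (hv_mul : ∀ a b : L, v (a * b) = v a + v b)
    (hv_add : ∀ a b : L, min (v a) (v b) ≤ v (a + b))
    (hv_zero : v 0 = ⊤) (hv_one : v 1 = 0)
    (k : ℕ) (hk : 1 ≤ k) (b : Fin k → L) (γ : Γ) :
    (∀ i, (γ : WithTop Γ) ≤ v (b i)) ↔
      (∀ j, 1 ≤ j → j ≤ k → ((j • γ : Γ) : WithTop Γ) ≤ v (esym b j)) :=
  valuation_esymm_iff_general v hv_mul hv_add hv_zero hv_one k b γ
end

section
/- Let K be an algebraically closed field of characteristic zero, let p ≥ 1 be an integer, and let ε ∈ K be a primitive p-th root of unity. Let s ≥ 0, k ≥ 2, n := k−1, and work in the ring A := MvPowerSeries (Fin (1+s+n)) K of formal power series in variables t, u₁,…,u_s, x₁,…,x_n; monomials are written t^β u^δ x^α with β ∈ ℕ, δ ∈ ℕ^s, α ∈ ℕⁿ. Say that F ∈ A is a series in t^p if every coefficient of F on a monomial t^β u^δ x^α with β not divisible by p is zero. Let b₁,…,b_k ∈ A satisfy: (i) each bᵢ has zero x-constant term (the coefficient of bᵢ on every monomial t^β u^δ x^0 vanishes);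 (ii) writing λᵢ ∈ (K⟦u₁,…,u_s⟧)ⁿ for the t-free x-linear part of bᵢ (λᵢⱼ is the power series in u whose coefficient on u^δ is the coefficient of bᵢ on the monomial t^0 u^δ x^{eⱼ}, where eⱼ ∈ ℕⁿ is the j-th standard basis vector), the vectors λ₁,…,λ_k are pairwise distinct; (iii) for each j = 1,…,k, the elementary symmetric function e_j(b₁,…,b_k) is a series in t^p. Then each bᵢ is a series in t^p; that is, each bᵢ ∈ K⟦t^p,u,x⟧. -/
/-- The monomial `t^β u^δ x^α` in the variables `Unit ⊕ Fin s ⊕ Fin n`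
(the `Unit` variable is `t`, the middle ones are `u`, the last ones are `x`). -/
noncomputable def mono (s n : ℕ) (β : ℕ) (δ : Fin s →₀ ℕ) (α : Fin n →₀ ℕ) :
    (Unit ⊕ Fin s ⊕ Fin n) →₀ ℕ :=
  Finsupp.sumElim (Finsupp.single () β) (Finsupp.sumElim δ α)

/-- `F` is a series in `t^p`: every coefficient on a monomial `t^β u^δ x^α`
with `p ∤ β` vanishes. -/
def isSeriesInTp (K : Type*) [Field K] {s n : ℕ} (p : ℕ)
    (F : MvPowerSeries (Unit ⊕ Fin s ⊕ Fin n) K) : Prop :=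
  ∀ m : (Unit ⊕ Fin s ⊕ Fin n) →₀ ℕ, ¬ p ∣ m (Sum.inl ()) →
    MvPowerSeries.coeff m F = 0

/-!
Substituting `t ↦ ε t` is a ring endomorphism `τ` of `K⟦t, u, x⟧` whose fixed points are
exactly the series in `t^p`. It fixes every `e_j(b)`, hence the polynomial `∏ᵢ (X - bᵢ)`, hence
the multiset of its roots `{bᵢ}`: so `τ` permutes the `bᵢ`. But `τ` does not change `t`-free
coefficients, in particular the linear parts `λᵢ`, which separate the `bᵢ`; so the permutation
is trivial and every `bᵢ` is fixed by `τ`.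
-/

open Polynomial in
theorem Multiset.eq_of_esymm_eq {R : Type*} [CommRing R] [IsDomain R] {S T : Multiset R}
    (hcard : card S = card T) (h : ∀ j, 0 < j → j ≤ card S → S.esymm j = T.esymm j) :
    S = T := by
  have hesymm : ∀ j ≤ card S, S.esymm j = T.esymm j := by
    rintro (_ | j) hj
    · simp [Multiset.esymm]
    · exact h _ j.succ_pos hj
  have hprod : (S.map fun a => X - C a).prod = (T.map fun a => X - C a).prod := by
    rw [prod_X_sub_X_eq_sum_esymm, prod_X_sub_X_eq_sum_esymm, ← hcard]
    refine Finset.sum_congr rfl fun j hj => ?_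
    rw [hesymm j (Nat.lt_succ_iff.mp (Finset.mem_range.mp hj))]
  simpa only [roots_multiset_prod_X_sub_C] using congrArg roots hprod

theorem Multiset.apply_eq_self_of_map_univ_eq {ι α β : Type*} [Fintype ι] {b : ι → α}
    {g : α → α} {L : α → β} (hL : ∀ a, L (g a) = L a) (hb : Function.Injective (L ∘ b))
    (hperm : Finset.univ.val.map (g ∘ b) = Finset.univ.val.map b) (i : ι) : g (b i) = b i := by
  obtain ⟨i', -, hi'⟩ := Multiset.mem_map.mp
    (hperm ▸ Multiset.mem_map_of_mem (g ∘ b) (Finset.mem_univ_val i))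
  have : i' = i := hb (by simp only [Function.comp_apply, hi', hL])
  rwa [this, eq_comm] at hi'

theorem esym_eq_esymm {A : Type*} [CommSemiring A] {k : ℕ} (b : Fin k → A) (j : ℕ) :
    esym b j = (Finset.univ.val.map b).esymm j :=
  (Finset.esymm_map_val _ _ _).symm

theorem map_esym {A B : Type*} [CommSemiring A] [CommSemiring B] (f : A →+* B) {k : ℕ}
    (b : Fin k → A) (j : ℕ) : f (esym b j) = esym (f ∘ b) j := by
  simp only [esym, map_sum, map_prod, Function.comp_apply]

namespace MvPowerSeries

variable {σ R : Type*} [DecidableEq σ]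

theorem coeff_rescale_mulSingle [CommSemiring R] (i : σ) (a : R) (f : MvPowerSeries σ R)
    (n : σ →₀ ℕ) : coeff n (rescale (Pi.mulSingle i a) f) = a ^ n i * coeff n f := by
  rw [coeff_rescale, Finsupp.prod, Finset.prod_eq_single i]
  · simp
  · intro j _ hj; simp [hj]
  · intro hi; simp [Finsupp.notMem_support_iff.mp hi]

theorem rescale_mulSingle_eq_self_iff [CommRing R] [IsDomain R] {p : ℕ} {ε : R}
    (hε : IsPrimitiveRoot ε p) (i : σ) (f : MvPowerSeries σ R) :
    rescale (Pi.mulSingle i ε) f = f ↔ ∀ n : σ →₀ ℕ, ¬ p ∣ n i → coeff n f = 0 := by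
  simp only [MvPowerSeries.ext_iff, coeff_rescale_mulSingle, ← hε.pow_eq_one_iff_dvd]
  refine forall_congr' fun n => ?_
  rw [← sub_eq_zero, ← sub_one_mul, mul_eq_zero, sub_eq_zero]
  tauto

end MvPowerSeries

theorem lemma_p_eq_one_general
    (K : Type*) [Field K]
    (p : ℕ) (ε : K) (hε : IsPrimitiveRoot ε p)
    (s k : ℕ)
    (b : Fin k → MvPowerSeries (Unit ⊕ Fin s ⊕ Fin (k - 1)) K)
    -- (ii) the `t`-free `x`-linear parts `λᵢ` are pairwise distinct
    (hdist : ∀ i i' : Fin k,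
      (∀ (j : Fin (k - 1)) (δ : Fin s →₀ ℕ),
        MvPowerSeries.coeff (mono s (k - 1) 0 δ (Finsupp.single j 1)) (b i) =
          MvPowerSeries.coeff (mono s (k - 1) 0 δ (Finsupp.single j 1)) (b i')) →
      i = i')
    -- (iii) each `e_j(b₁,…,b_k)` is a series in `t^p`
    (hesymm : ∀ j, 1 ≤ j → j ≤ k → isSeriesInTp K p (esym b j)) :
    ∀ i : Fin k, isSeriesInTp K p (b i) := by
  classical
  have := NoZeroDivisors.to_isDomain (MvPowerSeries (Unit ⊕ Fin s ⊕ Fin (k - 1)) K)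
  -- `τ` is the substitution `t ↦ ε t`.
  let τ := MvPowerSeries.rescale (Pi.mulSingle (Sum.inl () : Unit ⊕ Fin s ⊕ Fin (k - 1)) ε)
  have hfix : ∀ F, τ F = F ↔ isSeriesInTp K p F :=
    MvPowerSeries.rescale_mulSingle_eq_self_iff hε _
  have hperm : Finset.univ.val.map (τ ∘ b) = Finset.univ.val.map b := by
    refine Multiset.eq_of_esymm_eq (by simp) fun j hj0 hj => ?_
    rw [← esym_eq_esymm, ← esym_eq_esymm, ← map_esym, (hfix _).mpr]
    exact hesymm j hj0 (by simpa using hj)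
  let linearPart (F : MvPowerSeries (Unit ⊕ Fin s ⊕ Fin (k - 1)) K) (j : Fin (k - 1))
      (δ : Fin s →₀ ℕ) : K :=
    MvPowerSeries.coeff (mono s (k - 1) 0 δ (Finsupp.single j 1)) F
  have hlinear : ∀ F, linearPart (τ F) = linearPart F := fun F => by
    ext j δ
    simp only [linearPart, τ, MvPowerSeries.coeff_rescale_mulSingle, mono,
      Finsupp.sumElim_inl, Finsupp.single_eq_same, pow_zero, one_mul]
  intro i
  exact (hfix _).mp <| Multiset.apply_eq_self_of_map_univ_eq hlinear
    (fun i i' h => hdist i i' fun j δ => congrFun (congrFun h j) δ) hperm i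

/-- Lemma 3.5 ("we can take `p = 1`"): if the elementary symmetric functions of
`b₁, …, b_k` are series in `t^p`, each `bᵢ` has zero `x`-constant term, and the
`t`-free `x`-linear parts of the `bᵢ` are pairwise distinct, then each `bᵢ` is a
series in `t^p`. -/
theorem lemma_p_eq_one
    (K : Type*) [Field K] [IsAlgClosed K] [CharZero K]
    (p : ℕ) (hp : 1 ≤ p) (ε : K) (hε : IsPrimitiveRoot ε p)
    (s k : ℕ) (hk : 2 ≤ k)
    (b : Fin k → MvPowerSeries (Unit ⊕ Fin s ⊕ Fin (k - 1)) K)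
    -- (i) zero `x`-constant term
    (hconst : ∀ (i : Fin k) (m : (Unit ⊕ Fin s ⊕ Fin (k - 1)) →₀ ℕ),
      (∀ j : Fin (k - 1), m (Sum.inr (Sum.inr j)) = 0) →
      MvPowerSeries.coeff m (b i) = 0)
    -- (ii) the `t`-free `x`-linear parts `λᵢ` are pairwise distinct
    (hdist : ∀ i i' : Fin k,
      (∀ (j : Fin (k - 1)) (δ : Fin s →₀ ℕ),
        MvPowerSeries.coeff (mono s (k - 1) 0 δ (Finsupp.single j 1)) (b i) =
          MvPowerSeries.coeff (mono s (k - 1) 0 δ (Finsupp.single j 1)) (b i')) →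
      i = i')
    -- (iii) each `e_j(b₁,…,b_k)` is a series in `t^p`
    (hesymm : ∀ j, 1 ≤ j → j ≤ k → isSeriesInTp K p (esym b j)) :
    ∀ i : Fin k, isSeriesInTp K p (b i) :=
  lemma_p_eq_one_general K p ε hε s k b hdist hesymm
end

section
/- Let k ≥ 2 and 1 ≤ h ≤ k−1 be integers. In the polynomial ring MvPolynomial (Fin (k−1)) ℤ with variables x₁,…,x_{k−1}, for each i with h ≤ i ≤ k−1 define Pᵢ := e_{k−h}( (xⱼ)_{j≠i}, −(x₁+⋯+x_{k−1}) ) − e_{k−h}(x₁,…,x_{k−1}), where the first elementary symmetric polynomial is taken of the k−1 listed elements: the k−2 variables xⱼ with j ≠ i, together with the element −(x₁+⋯+x_{k−1}). Define γ_h ∈ ℕ^{k−1} as follows: if h < k−1, then (γ_h)ⱼ = 1 for h+1 ≤ j ≤ k−2, (γ_h)_{k−1} = 2, and (γ_h)ⱼ = 0 otherwise; if h = k−1, then γ_h = e_{k−1}, the exponent vector of the single variable x_{k−1}. Then the coefficient of the monomial x^{γ_h} in P_h equals −1 if h < k−1 and equals −2 if h = k−1; and for every i with h < i ≤ k−1,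 the coefficient of x^{γ_h} in Pᵢ equals 0. -/
/-- `Pᵢ = e_{k−h}((xⱼ)_{j≠i}, −(x₁+⋯+x_{k−1})) − e_{k−h}(x₁,…,x_{k−1})`:
the elementary symmetric polynomial of degree `k−h` of the `k−2` variables `xⱼ`,
`j ≠ i`, together with `−(x₁+⋯+x_{k−1})`, minus `e_{k−h}` of all the variables.
(Variables are `0`-indexed: the Lean index `i : Fin (k−1)` is the paper's `i+1`.) -/
noncomputable def P (k h : ℕ) (i : Fin (k - 1)) : MvPolynomial (Fin (k - 1)) ℤ :=
  esym (fun j => if j = i then -(∑ l, (MvPolynomial.X l : MvPolynomial (Fin (k - 1)) ℤ))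
                 else MvPolynomial.X j) (k - h)
    - esym (fun j => (MvPolynomial.X j : MvPolynomial (Fin (k - 1)) ℤ)) (k - h)

/-- The exponent `γ_h` of the monomial `x^{γ_h} = x_{h+1} ⋯ x_{k−1} ⬝ x_{k−1}`
(for `h < k−1`), resp. `x^{γ_h} = x_{k−1}` (for `h = k−1`), in `0`-indexed
variables: the Lean index `j : Fin (k−1)` is the paper's variable `x_{j+1}`. -/
noncomputable def gam (k h : ℕ) : Fin (k - 1) →₀ ℕ :=
  Finsupp.equivFunOnFinite.symm
    (fun j => if (j : ℕ) = k - 2 then (if h = k - 1 then 1 else 2)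
              else if h ≤ (j : ℕ) then 1 else 0)

namespace CG
open Finset MvPolynomial

variable {n : ℕ}

noncomputable def ind (T : Finset (Fin n)) : Fin n →₀ ℕ := ∑ j ∈ T, Finsupp.single j 1

lemma ind_apply (T : Finset (Fin n)) (a : Fin n) :
    ind T a = if a ∈ T then 1 else 0 := by
  classical
  simp [ind, Finsupp.finset_sum_apply, Finsupp.single_apply, Finset.sum_ite_eq]

lemma prod_X_eq (T : Finset (Fin n)) :
    (∏ j ∈ T, X j : MvPolynomial (Fin n) ℤ) = monomial (ind T) 1 := by
  classical
  induction T using Finset.cons_induction with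
  | empty => simp [ind]
  | cons a s ha ih =>
      have hx : ind (Finset.cons a s ha) = Finsupp.single a 1 + ind s := by
        rw [ind, Finset.sum_cons]; rfl
      rw [Finset.prod_cons, ih, hx, monomial_single_add, pow_one]

lemma esym_split {A : Type*} [CommRing A] {m : ℕ} (b : Fin n → A) (i : Fin n) :
    esym b (m+1) = (∑ T ∈ powersetCard (m+1) (univ.erase i), ∏ j ∈ T, b j)
      + b i * ∑ T ∈ powersetCard m (univ.erase i), ∏ j ∈ T, b j := by
  classical
  have key := powersetCard_succ_insert (notMem_erase i (univ : Finset (Fin n))) m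
  rw [Finset.insert_erase (mem_univ i)] at key
  have hdisj : Disjoint (powersetCard (m+1) (univ.erase i))
      ((powersetCard m (univ.erase i)).image (insert i)) := by
    rw [Finset.disjoint_left]
    intro T hT hT'
    obtain ⟨S, hS, rfl⟩ := Finset.mem_image.mp hT'
    have : insert i S ⊆ univ.erase i := (mem_powersetCard.mp hT).1
    exact (notMem_erase i univ) (this (mem_insert_self i S))
  have hinj : ∀ x ∈ powersetCard m (univ.erase i), ∀ y ∈ powersetCard m (univ.erase i),
      insert i x = insert i y → x = y := by
    intro x hx y hy hxy
    have hix : i ∉ x := fun hh => (notMem_erase i univ) ((mem_powersetCard.mp hx).1 hh)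
    have hiy : i ∉ y := fun hh => (notMem_erase i univ) ((mem_powersetCard.mp hy).1 hh)
    rw [← Finset.erase_insert hix, ← Finset.erase_insert hiy, hxy]
  rw [esym, key, sum_union hdisj, Finset.sum_image hinj, Finset.mul_sum]
  congr 1
  apply sum_congr rfl
  intro T hT
  rw [Finset.prod_insert]
  intro hiT
  exact (notMem_erase i univ) ((mem_powersetCard.mp hT).1 hiT)

lemma P_eq (k h m : ℕ) (hm : k - h = m + 1) (i : Fin (k-1)) :
    P k h i = (-(∑ l, X l) - X i) *
      ∑ T ∈ powersetCard m (univ.erase i), ∏ j ∈ T, (X j : MvPolynomial (Fin (k-1)) ℤ) := by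
  classical
  rw [P, hm, esym_split _ i, esym_split _ i]
  have e1 : ∀ (mm : ℕ),
      (∑ T ∈ powersetCard mm (univ.erase i), ∏ j ∈ T,
        (if j = i then -(∑ l, (X l : MvPolynomial (Fin (k-1)) ℤ)) else X j))
      = ∑ T ∈ powersetCard mm (univ.erase i), ∏ j ∈ T, (X j : MvPolynomial (Fin (k-1)) ℤ) := by
    intro mm
    apply sum_congr rfl
    intro T hT
    apply prod_congr rfl
    intro j hj
    have hji : j ≠ i := Finset.ne_of_mem_erase ((mem_powersetCard.mp hT).1 hj)
    simp [hji]
  rw [e1, e1]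
  simp only [eq_self_iff_true, if_true]
  ring

lemma gam_apply (k h : ℕ) (j : Fin (k-1)) :
    gam k h j = if (j : ℕ) = k - 2 then (if h = k - 1 then 1 else 2)
              else if h ≤ (j : ℕ) then 1 else 0 := rfl

lemma card_filter_le (n h : ℕ) :
    (univ.filter (fun j : Fin n => h ≤ (j:ℕ))).card = n - h := by
  classical
  rw [Finset.card_filter]
  rw [Fin.sum_univ_eq_sum_range (fun j => if h ≤ j then 1 else 0)]
  induction n with
  | zero => simp
  | succ m ih => rw [Finset.sum_range_succ, ih]; split_ifs <;> omega

lemma key (k h : ℕ) (hk : 2 ≤ k) (hh1 : 1 ≤ h) (hh2 : h ≤ k-1)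
    (l : Fin (k-1)) (T : Finset (Fin (k-1))) :
    Finsupp.single l 1 + ind T = gam k h ↔
      ((l:ℕ) = k - 2 ∧ T = univ.filter (fun j : Fin (k-1) => h ≤ (j:ℕ))) := by
  classical
  have hcv : ((⟨k-2, by omega⟩ : Fin (k-1)) : ℕ) = k - 2 := rfl
  constructor
  · intro H
    have Hj : ∀ j : Fin (k-1),
        (if l = j then 1 else 0) + (if j ∈ T then 1 else 0)
        = (if (j : ℕ) = k - 2 then (if h = k - 1 then 1 else 2)
              else if h ≤ (j : ℕ) then 1 else 0) := by
      intro j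
      have := DFunLike.congr_fun H j
      simpa [Finsupp.add_apply, Finsupp.single_apply, ind_apply, gam_apply] using this
    have hl : (l:ℕ) = k - 2 := by
      by_contra hlc
      have h1 := Hj l
      have h2 := Hj ⟨k-2, by omega⟩
      have hlk : (l:ℕ) < k - 1 := l.isLt
      have hne : ¬ (l = (⟨k-2, by omega⟩ : Fin (k-1))) := by
        intro e
        exact hlc ((congrArg Fin.val e).trans hcv)
      by_cases hk1 : h = k - 1 <;> by_cases hhl : h ≤ (l:ℕ) <;>
        by_cases hlT : l ∈ T <;>
          by_cases hcT : (⟨k-2, by omega⟩ : Fin (k-1)) ∈ T <;>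
            (try simp [hlc, hcv, hne, hk1, hhl, hlT, hcT] at h1 h2) <;>
              (try split_ifs at h1) <;> omega
    refine ⟨hl, ?_⟩
    ext j
    have h3 := Hj j
    have hjk : (j:ℕ) < k - 1 := j.isLt
    simp only [mem_filter, mem_univ, true_and]
    by_cases h4 : (j:ℕ) = k-2 <;> by_cases hk1 : h = k-1 <;> by_cases hjT : j ∈ T <;>
      (try simp [Fin.ext_iff, hl, h4, hk1, hjT] at h3 ⊢) <;>
        (try split_ifs at h3) <;> omega
  · rintro ⟨hl, rfl⟩
    ext j
    have hjk : (j:ℕ) < k - 1 := j.isLt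
    simp only [Finsupp.add_apply, Finsupp.single_apply, ind_apply, gam_apply,
      mem_filter, mem_univ, true_and, Fin.ext_iff, hl]
    split_ifs <;> omega

lemma coeff_P (k h : ℕ) (hk : 2 ≤ k) (hh1 : 1 ≤ h) (hh2 : h ≤ k-1) (i : Fin (k-1)) :
    MvPolynomial.coeff (gam k h) (P k h i) =
      if h ≤ (i:ℕ) then 0 else if (i:ℕ) = k-2 then -2 else -1 := by
  classical
  set A : Finset (Fin (k-1)) := univ.filter (fun j : Fin (k-1) => h ≤ (j:ℕ)) with hA
  set PS : Finset (Finset (Fin (k-1))) := powersetCard (k-h-1) (univ.erase i) with hP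
  rw [P_eq k h (k-h-1) (by omega) i, sub_mul, neg_mul, Finset.sum_mul, coeff_sub, coeff_neg, coeff_sum]
  have hXT : ∀ (l : Fin (k-1)), coeff (gam k h) (X l * ∑ T ∈ PS, ∏ j ∈ T, (X j : MvPolynomial (Fin (k-1)) ℤ))
      = if ((l:ℕ) = k - 2 ∧ A ∈ PS) then 1 else 0 := by
    intro l
    rw [Finset.mul_sum, coeff_sum]
    have : ∀ T ∈ PS, coeff (gam k h) (X l * ∏ j ∈ T, (X j : MvPolynomial (Fin (k-1)) ℤ))
        = if ((l:ℕ) = k - 2 ∧ T = A) then 1 else 0 := by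
      intro T _
      rw [prod_X_eq, ← pow_one (X l), ← monomial_single_add, coeff_monomial,
        if_congr (key k h hk hh1 hh2 l T) rfl rfl]
    rw [Finset.sum_congr rfl this]
    by_cases hl : (l:ℕ) = k - 2
    · simp only [hl, true_and]
      rw [Finset.sum_ite_eq' PS A (fun _ => (1:ℤ))]
    · simp [hl]
  rw [Finset.sum_congr rfl (fun l _ => hXT l), hXT i]
  have hcard : A.card = k - 1 - h := card_filter_le (k-1) h
  have hiA : i ∈ A ↔ h ≤ (i:ℕ) := by simp [hA]
  have hAP : A ∈ PS ↔ ¬ h ≤ (i:ℕ) := by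
    rw [hP, mem_powersetCard, Finset.subset_erase]
    constructor
    · rintro ⟨⟨-, hi⟩, -⟩
      rw [← hiA]; exact hi
    · intro hi
      exact ⟨⟨Finset.subset_univ A, fun hc => hi (hiA.mp hc)⟩, by omega⟩
  by_cases hhi : h ≤ (i:ℕ)
  · have : A ∉ PS := by rw [hAP]; exact fun hc => hc hhi
    simp [hhi, this]
  · have hin : A ∈ PS := hAP.mpr hhi
    have hc2 : ∀ l : Fin (k-1), ((l:ℕ) = k - 2) ↔ l = (⟨k-2, by omega⟩ : Fin (k-1)) := by
      intro l; rw [Fin.ext_iff]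
    simp only [hin, and_true, hc2]
    rw [Finset.sum_ite_eq' univ (⟨k-2, by omega⟩ : Fin (k-1)) (fun _ => (1:ℤ))]
    simp [hhi]
    split_ifs <;> ring

end CG


/-- Coefficient computation at the end of the proof of Lemma 4.1: the monomial
`x^{γ_h}` occurs in `P_h` with coefficient `−1` (resp. `−2` if `h = k−1`), and
does not occur in `Pᵢ` for `h < i ≤ k−1`. -/
theorem coeff_gamma_P
    (k h : ℕ) (hk : 2 ≤ k) (hh1 : 1 ≤ h) (hh2 : h ≤ k - 1) :
    MvPolynomial.coeff (gam k h) (P k h ⟨h - 1, by omega⟩) =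
        (if h = k - 1 then -2 else -1) ∧
      ∀ i : Fin (k - 1), h < (i : ℕ) + 1 → MvPolynomial.coeff (gam k h) (P k h i) = 0 := by
  constructor
  · rw [CG.coeff_P k h hk hh1 hh2]
    simp only [Fin.val_mk]
    split_ifs <;> omega
  · intro i hi
    rw [CG.coeff_P k h hk hh1 hh2]
    have : h ≤ (i:ℕ) := by omega
    simp [this]
end

section
/- Let k ≥ 2 and 1 ≤ h ≤ k−1 be integers. In MvPolynomial (Fin (k−1)) ℤ with variables x₁,…,x_{k−1}, for h ≤ i ≤ k−1 define Pᵢ := e_{k−h}( (xⱼ)_{j≠i}, −(x₁+⋯+x_{k−1}) ) − e_{k−h}(x₁,…,x_{k−1}) (the first elementary symmetric polynomial taken of the k−2 variables xⱼ with j ≠ i together with −(x₁+⋯+x_{k−1})), and define γ_h ∈ ℕ^{k−1} by: (γ_h)ⱼ = 1 for h+1 ≤ j ≤ k−2, (γ_h)_{k−1} = 2, and (γ_h)ⱼ = 0 otherwise, when h < k−1; and γ_h = e_{k−1} (the exponent of x_{k−1}) when h = k−1. Then for every i with h ≤ i ≤ k−1 and every α ∈ ℕ^{k−1} such that the coefficient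 of x^α in Pᵢ is nonzero, one has γ_h ≤ α in the lexicographic order on ℕ^{k−1} (coordinates compared starting from the first). -/
/-- Lexicographic order on exponents (coordinates compared starting from the first). -/
def lexLE {n : ℕ} (γ α : Fin n →₀ ℕ) : Prop :=
  γ = α ∨ ∃ j : Fin n, (∀ l : Fin n, l < j → γ l = α l) ∧ γ j < α j

open MvPolynomial

/- ### Auxiliary lemmas -/

lemma prod_X_eq {n : ℕ} (T : Finset (Fin n)) :
    (∏ j ∈ T, (X j : MvPolynomial (Fin n) ℤ)) = monomial (∑ j ∈ T, Finsupp.single j 1) 1 := by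
  induction T using Finset.cons_induction with
  | empty => simp
  | cons a s ha ih =>
      rw [Finset.prod_cons, ih, Finset.sum_cons, X, monomial_mul, one_mul]

lemma sum_single_apply {n : ℕ} (T : Finset (Fin n)) (p : Fin n) :
    (∑ j ∈ T, Finsupp.single j (1:ℕ)) p = if p ∈ T then 1 else 0 := by
  rw [Finset.sum_apply']
  simp [Finsupp.single_apply]

lemma coeff_P_bound (k h : ℕ) (i : Fin (k - 1)) (α : Fin (k - 1) →₀ ℕ)
    (hne : MvPolynomial.coeff α (P k h i) ≠ 0) :
    ∃ l : Fin (k - 1), ∀ p, α p ≤ if p = l then 2 else 1 := by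
  rw [P, coeff_sub] at hne
  have hcases : coeff α (esym (fun j => if j = i then
        -(∑ l, (X l : MvPolynomial (Fin (k - 1)) ℤ)) else X j) (k - h)) ≠ 0 ∨
      coeff α (esym (fun j => (X j : MvPolynomial (Fin (k - 1)) ℤ)) (k - h)) ≠ 0 := by
    by_contra hc
    push_neg at hc
    rw [hc.1, hc.2, sub_zero] at hne
    exact hne rfl
  rcases hcases with hca | hcb
  · rw [esym, coeff_sum] at hca
    obtain ⟨T, hT, hTne⟩ := Finset.exists_ne_zero_of_sum_ne_zero hca
    by_cases hiT : i ∈ T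
    · rw [← Finset.mul_prod_erase T _ hiT] at hTne
      have hrw : (∏ j ∈ T.erase i, (if j = i then
            -(∑ l, (X l : MvPolynomial (Fin (k - 1)) ℤ)) else X j)) =
          monomial (∑ j ∈ T.erase i, Finsupp.single j 1) 1 := by
        rw [← prod_X_eq]
        exact Finset.prod_congr rfl fun j hj => by
          simp [(Finset.mem_erase.mp hj).1]
      rw [if_pos rfl, hrw, neg_mul, Finset.sum_mul] at hTne
      have hTne' : coeff α (∑ l : Fin (k-1),
          (X l * monomial (∑ j ∈ T.erase i, Finsupp.single j 1) 1 :
            MvPolynomial (Fin (k - 1)) ℤ)) ≠ 0 := by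
        intro hc
        rw [coeff_neg, hc, neg_zero] at hTne
        exact hTne rfl
      rw [coeff_sum] at hTne'
      obtain ⟨l, _, hlne⟩ := Finset.exists_ne_zero_of_sum_ne_zero hTne'
      rw [X, monomial_mul, one_mul, coeff_monomial] at hlne
      have hα : Finsupp.single l 1 + ∑ j ∈ T.erase i, Finsupp.single j 1 = α := by
        by_contra hc
        rw [if_neg hc] at hlne
        exact hlne rfl
      refine ⟨l, fun p => ?_⟩
      rw [← hα]
      have h1 : (Finsupp.single l (1:ℕ)) p = if p = l then 1 else 0 := by
        simp [Finsupp.single_apply, eq_comm]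
      have h2 := sum_single_apply (T.erase i) p
      rw [Finsupp.add_apply, h1, h2]
      split_ifs <;> omega
    · have hrw : (∏ j ∈ T, (if j = i then
            -(∑ l, (X l : MvPolynomial (Fin (k - 1)) ℤ)) else X j)) =
          monomial (∑ j ∈ T, Finsupp.single j 1) 1 := by
        rw [← prod_X_eq]
        exact Finset.prod_congr rfl fun j hj => by
          have : j ≠ i := fun hc => hiT (hc ▸ hj)
          simp [this]
      rw [hrw, coeff_monomial] at hTne
      have hα : ∑ j ∈ T, Finsupp.single j (1:ℕ) = α := by
        by_contra hc
        rw [if_neg hc] at hTne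
        exact hTne rfl
      refine ⟨i, fun p => ?_⟩
      rw [← hα, sum_single_apply]
      split_ifs <;> omega
  · rw [esym, coeff_sum] at hcb
    obtain ⟨T, hT, hTne⟩ := Finset.exists_ne_zero_of_sum_ne_zero hcb
    rw [prod_X_eq, coeff_monomial] at hTne
    have hα : ∑ j ∈ T, Finsupp.single j (1:ℕ) = α := by
      by_contra hc
      rw [if_neg hc] at hTne
      exact hTne rfl
    refine ⟨i, fun p => ?_⟩
    rw [← hα, sum_single_apply]
    split_ifs <;> omega

lemma esym_hom {n : ℕ} (b : Fin n → MvPolynomial (Fin n) ℤ)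
    (hbh : ∀ j, (b j).IsHomogeneous 1) (m : ℕ) : (esym b m).IsHomogeneous m := by
  refine IsHomogeneous.sum _ _ _ fun T hT => ?_
  have hcard : T.card = m := (Finset.mem_powersetCard.mp hT).2
  simpa [hcard] using MvPolynomial.IsHomogeneous.prod T b (fun _ => 1) (fun j _ => hbh j)

lemma P_hom (k h : ℕ) (i : Fin (k - 1)) (hh2 : h ≤ k - 1) :
    (P k h i).IsHomogeneous (k - h) := by
  refine MvPolynomial.IsHomogeneous.sub (esym_hom _ ?_ _) (esym_hom _ ?_ _)
  · intro j
    by_cases hj : j = i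
    · simp only [hj, if_pos rfl]
      exact (IsHomogeneous.sum _ _ 1 fun l _ => isHomogeneous_X _ _).neg
    · simp only [if_neg hj]
      exact isHomogeneous_X _ _
  · exact fun j => isHomogeneous_X _ _

lemma sum_univ_of_coeff_ne_zero (k h : ℕ) (i : Fin (k - 1)) (hh2 : h ≤ k - 1)
    (α : Fin (k - 1) →₀ ℕ) (hne : MvPolynomial.coeff α (P k h i) ≠ 0) :
    ∑ p, α p = k - h := by
  have hw := P_hom k h i hh2 hne
  have h1 : (Finsupp.weight 1) α = ∑ p ∈ α.support, α p := by
    simp [Finsupp.weight_apply, Finsupp.sum]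
  have h2 : ∑ p, α p = ∑ p ∈ α.support, α p :=
    (Finset.sum_subset (Finset.subset_univ _)
      (by simp +contextual [Finsupp.notMem_support_iff])).symm
  rw [h2, ← h1, hw]

lemma counting1 (n j h : ℕ) (hj : j ≤ n) :
    (∑ p : Fin n, if (p : ℕ) < j ∧ h ≤ (p : ℕ) then 1 else 0) = j - h := by
  rw [Fin.sum_univ_eq_sum_range (fun p => if p < j ∧ h ≤ p then 1 else 0)]
  have hf : (Finset.range n).filter (fun p => p < j ∧ h ≤ p) = Finset.Ico h j := by
    ext x
    simp only [Finset.mem_filter, Finset.mem_range, Finset.mem_Ico]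
    omega
  rw [← Finset.sum_filter, hf, Finset.sum_const, smul_eq_mul, mul_one, Nat.card_Ico]

lemma counting2 (n j : ℕ) :
    (∑ p : Fin n, if j < (p : ℕ) then 1 else 0) = n - (j + 1) := by
  rw [Fin.sum_univ_eq_sum_range (fun p => if j < p then 1 else 0)]
  have hf : (Finset.range n).filter (fun p => j < p) = Finset.Ico (j + 1) n := by
    ext x
    simp only [Finset.mem_filter, Finset.mem_range, Finset.mem_Ico]
    omega
  rw [← Finset.sum_filter, hf, Finset.sum_const, smul_eq_mul, mul_one, Nat.card_Ico]

lemma gam_apply (k h : ℕ) (p : Fin (k - 1)) :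
    gam k h p = if (p : ℕ) = k - 2 then (if h = k - 1 then 1 else 2)
                else if h ≤ (p : ℕ) then 1 else 0 := rfl

lemma final_lemma (k h : ℕ) (hk : 2 ≤ k) (hh1 : 1 ≤ h) (hh2 : h ≤ k - 1)
    (α : Fin (k - 1) →₀ ℕ) (hsum : ∑ p, α p = k - h)
    (hb : ∃ l : Fin (k - 1), ∀ p, α p ≤ if p = l then 2 else 1) :
    lexLE (gam k h) α := by
  obtain ⟨l, hl⟩ := hb
  by_cases heq : gam k h = α
  · exact Or.inl heq
  right
  have hs : (Finset.univ.filter (fun p : Fin (k - 1) => gam k h p ≠ α p)).Nonempty := by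
    rw [Finset.filter_nonempty_iff]
    by_contra hcon
    push_neg at hcon
    exact heq (Finsupp.ext fun p => hcon p (Finset.mem_univ p))
  set j := Finset.min' _ hs with hjdef
  have hjmem := Finset.min'_mem _ hs
  have hjne : gam k h j ≠ α j := (Finset.mem_filter.mp hjmem).2
  have hbelow : ∀ p, p < j → gam k h p = α p := by
    intro p hp
    by_contra hc
    exact absurd (Finset.min'_le _ p (by simp [hc])) (not_le.mpr hp)
  refine ⟨j, hbelow, ?_⟩
  rcases lt_or_gt_of_ne hjne with h1 | h2
  · exact h1
  exfalso
  by_cases hlast : (j : ℕ) = k - 2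
  · -- j is the last index
    have hall : ∀ p : Fin (k - 1), p ≠ j → α p = gam k h p := by
      intro p hp
      refine (hbelow p ?_).symm
      have hpk : (p : ℕ) < k - 1 := p.isLt
      have hpj : (p : ℕ) ≠ (j : ℕ) := fun hc => hp (Fin.ext hc)
      exact Fin.lt_def.mpr (by omega)
    have hsplit : α j + ∑ p ∈ Finset.univ.erase j, α p = k - h := by
      rw [Finset.add_sum_erase _ _ (Finset.mem_univ j)]
      exact hsum
    have herase : ∑ p ∈ Finset.univ.erase j, α p
        = ∑ p ∈ Finset.univ.erase j, (if (p:ℕ) < k - 2 ∧ h ≤ (p : ℕ) then 1 else 0) := by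
      refine Finset.sum_congr rfl fun p hp => ?_
      have hpj : p ≠ j := (Finset.mem_erase.mp hp).1
      have hpk : (p : ℕ) < k - 1 := p.isLt
      have hplt : (p : ℕ) < k - 2 := by
        have : (p : ℕ) ≠ (j : ℕ) := fun hc => hpj (Fin.ext hc)
        omega
      rw [hall p hpj, gam_apply]
      have hne2 : (p : ℕ) ≠ k - 2 := by omega
      simp [hne2, hplt]
    have hcount : ∑ p ∈ Finset.univ.erase j, (if (p:ℕ) < k - 2 ∧ h ≤ (p : ℕ) then 1 else 0)
        = (k - 2) - h := by
      have hj0 : (if (j:ℕ) < k - 2 ∧ h ≤ (j : ℕ) then 1 else 0) = 0 := by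
        simp [hlast]
      have := Finset.add_sum_erase Finset.univ
        (fun p : Fin (k-1) => if (p:ℕ) < k - 2 ∧ h ≤ (p : ℕ) then 1 else 0) (Finset.mem_univ j)
      beta_reduce at this
      rw [hj0, zero_add] at this
      rw [this, counting1 (k - 1) (k - 2) h (by omega)]
    rw [herase, hcount] at hsplit
    have hgj : gam k h j = if h = k - 1 then 1 else 2 := by
      rw [gam_apply, if_pos hlast]
    rw [hgj] at h2
    by_cases hhk : h = k - 1
    · rw [if_pos hhk] at h2
      omega
    · rw [if_neg hhk] at h2
      omega
  · -- j is not the last index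
    have hjk : (j : ℕ) < k - 2 := by
      have := j.isLt
      omega
    have hgj : gam k h j = if h ≤ (j : ℕ) then 1 else 0 := by
      rw [gam_apply, if_neg hlast]
    rw [hgj] at h2
    have hhj : h ≤ (j : ℕ) := by
      by_contra hc
      rw [if_neg hc] at h2
      omega
    rw [if_pos hhj] at h2
    have hαj : α j = 0 := by omega
    have hpt : ∀ p : Fin (k - 1), α p ≤
        (if (p : ℕ) < (j : ℕ) ∧ h ≤ (p : ℕ) then 1 else 0)
        + ((if (j : ℕ) < (p : ℕ) then 1 else 0) + (if p = l then 1 else 0)) := by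
      intro p
      rcases lt_trichotomy p j with hpj | hpj | hpj
      · have hplt : (p : ℕ) < (j : ℕ) := hpj
        rw [← hbelow p hpj, gam_apply]
        have hne2 : (p : ℕ) ≠ k - 2 := by omega
        rw [if_neg hne2]
        split_ifs <;> omega
      · rw [hpj, hαj]
        exact Nat.zero_le _
      · have hjp : (j : ℕ) < (p : ℕ) := hpj
        have := hl p
        have hnp : ¬((p : ℕ) < (j : ℕ) ∧ h ≤ (p : ℕ)) := by omega
        rw [if_neg hnp, if_pos hjp]
        split_ifs at this ⊢ <;> omega
    have hsum_le : k - h ≤ ((j : ℕ) - h) + ((k - 1 - ((j : ℕ) + 1)) + 1) := by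
      calc k - h = ∑ p, α p := hsum.symm
        _ ≤ ∑ p : Fin (k - 1), ((if (p : ℕ) < (j : ℕ) ∧ h ≤ (p : ℕ) then 1 else 0)
              + ((if (j : ℕ) < (p : ℕ) then 1 else 0) + (if p = l then 1 else 0))) :=
            Finset.sum_le_sum fun p _ => hpt p
        _ = ((j : ℕ) - h) + ((k - 1 - ((j : ℕ) + 1)) + 1) := by
            rw [Finset.sum_add_distrib, Finset.sum_add_distrib,
              counting1 (k - 1) (j : ℕ) h (by omega), counting2 (k - 1) (j : ℕ)]
            congr 2
            rw [Finset.sum_ite_eq' Finset.univ l (fun _ => 1), if_pos (Finset.mem_univ l)]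
    omega

/-- Lexicographic minimality in the final step of the proof of Lemma 4.1: among
the monomials appearing in the polynomials `Pᵢ`, `h ≤ i ≤ k−1`, the monomial
`x^{γ_h}` has the smallest exponent in the lexicographic order. -/
theorem gamma_lex_minimal
    (k h : ℕ) (hk : 2 ≤ k) (hh1 : 1 ≤ h) (hh2 : h ≤ k - 1) :
    ∀ i : Fin (k - 1), h ≤ (i : ℕ) + 1 →
      ∀ α : Fin (k - 1) →₀ ℕ, MvPolynomial.coeff α (P k h i) ≠ 0 →
        lexLE (gam k h) α := by
  intro i hi α hne
  exact final_lemma k h hk hh1 hh2 α (sum_univ_of_coeff_ne_zero k h i hh2 α hne)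
    (coeff_P_bound k h i α hne)
end
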